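/- Comonotonic additivity of quantiles: let (Ω, 𝓕, P) be a probability space, Z : Ω → ℝ a random variable, and f, g : ℝ → ℝ nondecreasing (hence Borel measurable) functions. Set X = f ∘ Z and Y = g ∘ Z (a comonotonic pair). Then for every τ ∈ (0,1), the τ-quantile of the sum equals the sum of the τ-quantiles: q_{X+Y}(τ) = q_X(τ) + q_Y(τ). -/

import Mathlib

open MeasureTheory

/-- The (lower) `τ`-quantile of a probability measure `μ` on `ℝ`:
`q(μ, τ) = sInf {x | τ ≤ μ((-∞, x])}`. -/
noncomputable def lowerQuantile (μ : Measure ℝ) (τ : ℝ) : ℝ :=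
  sInf {x : ℝ | τ ≤ (μ (Set.Iic x)).toReal}

/-!
For monotone `φ`, the `τ`-quantile of `φ(Z)` is read off `q = q_Z(τ)`: it is `φ q` when
`P(Z < q) < τ`, and the left limit `φ(q-)` otherwise. The case depends on `Z` alone, and both
`φ ↦ φ q` and `φ ↦ φ(q-)` are additive on monotone functions.
-/

open Set Filter Function ProbabilityTheory Topology

theorem Monotone.leftLim_add {α β : Type*} [LinearOrder α] [TopologicalSpace α] [OrderTopology α]
    [ConditionallyCompleteLinearOrder β] [TopologicalSpace β] [OrderTopology β] [Add β]
    [ContinuousAdd β] {f g : α → β} (hf : Monotone f) (hg : Monotone g) (x : α)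
    [(𝓝[<] x).NeBot] :
    leftLim (f + g) x = leftLim f x + leftLim g x :=
  leftLim_eq_of_tendsto ((hf.tendsto_leftLim x).add (hg.tendsto_leftLim x))

section lowerQuantile

variable {μ : Measure ℝ} {τ : ℝ}

lemma bddBelow_setOf_le_cdf (hτ : 0 < τ) : BddBelow {x | τ ≤ cdf μ x} := by
  obtain ⟨x₀, hx₀⟩ := ((tendsto_cdf_atBot μ).eventually_lt_const hτ).exists
  exact ⟨x₀, fun x hx => le_of_not_gt fun hxx₀ => (hx.trans (monotone_cdf μ hxx₀.le)).not_gt hx₀⟩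

lemma nonempty_setOf_le_cdf (hτ : τ < 1) : {x | τ ≤ cdf μ x}.Nonempty :=
  ((tendsto_cdf_atTop μ).eventually_const_le hτ).exists

lemma lowerQuantile_map_eq_sInf {φ : ℝ → ℝ} (hφ : Measurable φ) (τ : ℝ) :
    lowerQuantile (μ.map φ) τ = sInf {y | τ ≤ μ.real (φ ⁻¹' Iic y)} := by
  simp only [lowerQuantile, ← measureReal_def, map_measureReal_apply hφ measurableSet_Iic]

variable [IsProbabilityMeasure μ]

lemma lowerQuantile_eq_sInf_cdf :
    lowerQuantile μ τ = sInf {x | τ ≤ cdf μ x} := by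
  simp only [lowerQuantile, cdf_eq_real, measureReal_def]

/-- Right continuity of the cdf makes the infimum defining the quantile attained. -/
lemma le_cdf_lowerQuantile (hτ : τ ∈ Ioo 0 1) : τ ≤ cdf μ (lowerQuantile μ τ) := by
  rw [lowerQuantile_eq_sInf_cdf]
  have hne := nonempty_setOf_le_cdf (μ := μ) hτ.2
  refine ge_of_tendsto (((cdf μ).right_continuous _).mono Ioi_subset_Ici_self) ?_
  filter_upwards [self_mem_nhdsWithin] with x hx
  obtain ⟨y, hy, hyx⟩ := exists_lt_of_csInf_lt hne hx
  exact hy.trans (monotone_cdf μ hyx.le)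

lemma lowerQuantile_le_iff (hτ : τ ∈ Ioo 0 1) {x : ℝ} :
    lowerQuantile μ τ ≤ x ↔ τ ≤ μ.real (Iic x) := by
  rw [← cdf_eq_real]
  refine ⟨fun h => (le_cdf_lowerQuantile hτ).trans (monotone_cdf μ h), fun h => ?_⟩
  rw [lowerQuantile_eq_sInf_cdf]
  exact csInf_le (bddBelow_setOf_le_cdf hτ.1) h

variable {φ : ℝ → ℝ}

lemma lowerQuantile_map_of_measureReal_Iio_lt (hφ : Monotone φ) (hτ : τ ∈ Ioo 0 1)
    (h : μ.real (Iio (lowerQuantile μ τ)) < τ) :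
    lowerQuantile (μ.map φ) τ = φ (lowerQuantile μ τ) := by
  set q := lowerQuantile μ τ
  rw [lowerQuantile_map_eq_sInf hφ.measurable]
  refine IsLeast.csInf_eq ⟨?_, fun y hy => le_of_not_gt fun hyq => ?_⟩
  · exact ((lowerQuantile_le_iff hτ).mp le_rfl).trans (measureReal_mono fun x hx => hφ hx)
  · have : φ ⁻¹' Iic y ⊆ Iio q := fun x hx => hφ.reflect_lt (lt_of_le_of_lt hx hyq)
    exact (hy.trans (measureReal_mono this)).not_gt h

lemma lowerQuantile_map_of_le_measureReal_Iio (hφ : Monotone φ) (hτ : τ ∈ Ioo 0 1)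
    (h : τ ≤ μ.real (Iio (lowerQuantile μ τ))) :
    lowerQuantile (μ.map φ) τ = leftLim φ (lowerQuantile μ τ) := by
  rw [lowerQuantile_map_eq_sInf hφ.measurable]
  refine IsLeast.csInf_eq ⟨?_, fun y hy => ?_⟩
  · exact h.trans (measureReal_mono fun x hx => hφ.le_leftLim hx)
  rw [hφ.leftLim_eq_sSup]
  refine csSup_le (nonempty_Iio.image φ) ?_
  rintro _ ⟨x, hxq, rfl⟩
  refine le_of_not_gt fun hyx => hxq.not_ge ((lowerQuantile_le_iff hτ).mpr ?_)
  have : φ ⁻¹' Iic y ⊆ Iic x := fun z hz => (hφ.reflect_lt (lt_of_le_of_lt hz hyx)).le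
  exact hy.trans (measureReal_mono this)

end lowerQuantile

/-- Comonotonic additivity of quantiles: if `X = f ∘ Z` and `Y = g ∘ Z` with `f, g`
nondecreasing (a comonotonic pair), then for every `τ ∈ (0,1)` the `τ`-quantile of the
law of `X + Y` equals the sum of the `τ`-quantiles of the laws of `X` and `Y`. -/
theorem comonotone_quantile_additive
    {Ω : Type*} [MeasurableSpace Ω] (P : Measure Ω) [IsProbabilityMeasure P]
    (Z : Ω → ℝ) (hZ : Measurable Z)
    (f g : ℝ → ℝ) (hf : Monotone f) (hg : Monotone g)
    (τ : ℝ) (hτ : τ ∈ Set.Ioo (0 : ℝ) 1) :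
    lowerQuantile (P.map (fun ω => f (Z ω) + g (Z ω))) τ
      = lowerQuantile (P.map (fun ω => f (Z ω))) τ
        + lowerQuantile (P.map (fun ω => g (Z ω))) τ := by
  have := Measure.isProbabilityMeasure_map (μ := P) hZ.aemeasurable
  have hfg : Monotone (f + g) := hf.add hg
  have hmap : ∀ φ : ℝ → ℝ, Monotone φ → P.map (φ ∘ Z) = (P.map Z).map φ :=
    fun φ hφ => (Measure.map_map hφ.measurable hZ).symm
  rw [← comp_def f Z, ← comp_def g Z, show (fun ω => f (Z ω) + g (Z ω)) = (f + g) ∘ Z from rfl,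
    hmap f hf, hmap g hg, hmap (f + g) hfg]
  rcases lt_or_ge ((P.map Z).real (Iio (lowerQuantile (P.map Z) τ))) τ with h | h
  · rw [lowerQuantile_map_of_measureReal_Iio_lt hf hτ h,
      lowerQuantile_map_of_measureReal_Iio_lt hg hτ h,
      lowerQuantile_map_of_measureReal_Iio_lt hfg hτ h, Pi.add_apply]
  · rw [lowerQuantile_map_of_le_measureReal_Iio hf hτ h,
      lowerQuantile_map_of_le_measureReal_Iio hg hτ h,
      lowerQuantile_map_of_le_measureReal_Iio hfg hτ h, hf.leftLim_add hg]
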